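/- Let H be an induced subgraph of a graph G and suppose G = G_1 ∪ G_2 for induced subgraphs G_1 and G_2 of G with H ⊆ G_1. Let φ_0 be a proper coloring of G, let L_1 and L_2 be list assignments for G, and let δ be an (L_1,L_2)-trajectory in H. If (i) δ lifts to an (L_1,L_2)-trajectory ψ in G_1 starting with the restriction of φ_0 to V(G_1), and (ii) the restriction of ψ to G_1 ∩ G_2 lifts to an (L_1,L_2)-trajectory in G_2 starting with the restriction of φ_0 to V(G_2), then δ lifts to an (L_1,L_2)-trajectory in G starting with φ_0. -/

import Mathlib

/-- Applying a sequence of recolorings `(vertex, color)` to a coloring, one at a time. -/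
def applySeq {V : Type*} [DecidableEq V] (φ : V → ℕ) (σ : List (V × ℕ)) : V → ℕ :=
  σ.foldl (fun ψ p => Function.update ψ p.1 p.2) φ

/-- `φ` is a proper coloring of the subgraph of `G` induced on the vertex set `S`. -/
def ProperOn {V : Type*} (G : SimpleGraph V) (S : Finset V) (φ : V → ℕ) : Prop :=
  ∀ u ∈ S, ∀ v ∈ S, G.Adj u v → φ u ≠ φ v

/-- A sequence of recolorings is proper (on `G[S]`, starting from `φ`) if every
intermediate coloring is a proper coloring of `G[S]`. -/
def ProperSeqOn {V : Type*} [DecidableEq V] (G : SimpleGraph V) (S : Finset V)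
    (φ : V → ℕ) (σ : List (V × ℕ)) : Prop :=
  ∀ τ : List (V × ℕ), τ <+: σ → ProperOn G S (applySeq φ τ)

/-- A sequence of recolorings is once-only if each vertex is recolored at most once. -/
def OnceOnly {V : Type*} (σ : List (V × ℕ)) : Prop := (σ.map Prod.fst).Nodup

/-- All recolorings of `σ` happen at vertices of `S`. -/
def SeqIn {V : Type*} (S : Finset V) (σ : List (V × ℕ)) : Prop := ∀ p ∈ σ, p.1 ∈ S

/-- `(σ1, σ2)` is a witness that `(φ0, φ1, φ2)` is an `(L1, L2)`-trajectory in the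
subgraph of `G` induced on `S`: `φ0` is a proper coloring of `G[S]`, and for
`i ∈ {1,2}`, `φ i` is an `L i`-coloring of `G[S]` obtained from `φ (i-1)` by the
proper once-only sequence of recolorings `σ i`. -/
def WitnessOn {V : Type*} [DecidableEq V] (G : SimpleGraph V) (S : Finset V)
    (L1 L2 : V → Finset ℕ) (φ0 φ1 φ2 : V → ℕ) (σ1 σ2 : List (V × ℕ)) : Prop :=
  ProperOn G S φ0 ∧
  SeqIn S σ1 ∧ OnceOnly σ1 ∧ ProperSeqOn G S φ0 σ1 ∧ applySeq φ0 σ1 = φ1 ∧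
    (∀ v ∈ S, φ1 v ∈ L1 v) ∧
  SeqIn S σ2 ∧ OnceOnly σ2 ∧ ProperSeqOn G S φ1 σ2 ∧ applySeq φ1 σ2 = φ2 ∧
    (∀ v ∈ S, φ2 v ∈ L2 v)

/-- `(φ0, φ1, φ2)` is an `(L1, L2)`-trajectory in `G[S]` (starting with `φ0`). -/
def TrajectoryOn {V : Type*} [DecidableEq V] (G : SimpleGraph V) (S : Finset V)
    (L1 L2 : V → Finset ℕ) (φ0 φ1 φ2 : V → ℕ) : Prop :=
  ∃ σ1 σ2 : List (V × ℕ), WitnessOn G S L1 L2 φ0 φ1 φ2 σ1 σ2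

/-- `σ^T`: the subsequence of `σ` consisting of the recolorings of vertices of `T`. -/
def subSeq {V : Type*} [DecidableEq V] (T : Finset V) (σ : List (V × ℕ)) :
    List (V × ℕ) :=
  σ.filter (fun p => p.1 ∈ T)

/-- `σ` is `T`-late: the recolorings of vertices of `T` appear after all the other
recolorings, i.e. `σ = σ^{complement of T} ++ σ^T`. -/
def LateFor {V : Type*} [DecidableEq V] (T : Finset V) (σ : List (V × ℕ)) : Prop :=
  σ = σ.filter (fun p => p.1 ∉ T) ++ subSeq T σ

/-- `(σ1, σ2)` witnesses that the `(L1, L2)`-trajectory `(δ0, δ1, δ2)` in `G[T]` lifts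
to the `(L1, L2)`-trajectory `(φ0, φ1, φ2)` in `G[S]`: each `δ i` is the restriction of
`φ i` to `T`, and each `σ i` is a proper once-only `T`-late sequence of recolorings from
`φ (i-1)` to `φ i`. -/
def LiftWitness {V : Type*} [DecidableEq V] (G : SimpleGraph V) (S T : Finset V)
    (L1 L2 : V → Finset ℕ) (δ0 δ1 δ2 φ0 φ1 φ2 : V → ℕ)
    (σ1 σ2 : List (V × ℕ)) : Prop :=
  (∀ v ∈ T, φ0 v = δ0 v) ∧ (∀ v ∈ T, φ1 v = δ1 v) ∧ (∀ v ∈ T, φ2 v = δ2 v) ∧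
  WitnessOn G S L1 L2 φ0 φ1 φ2 σ1 σ2 ∧ LateFor T σ1 ∧ LateFor T σ2

/-- The `(L1, L2)`-trajectory `(δ0, δ1, δ2)` in `G[T]` lifts to the `(L1, L2)`-trajectory
`(φ0, φ1, φ2)` in `G[S]`. -/
def LiftsTo {V : Type*} [DecidableEq V] (G : SimpleGraph V) (S T : Finset V)
    (L1 L2 : V → Finset ℕ) (δ0 δ1 δ2 φ0 φ1 φ2 : V → ℕ) : Prop :=
  ∃ σ1 σ2 : List (V × ℕ), LiftWitness G S T L1 L2 δ0 δ1 δ2 φ0 φ1 φ2 σ1 σ2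


lemma applySeq_nil' {V : Type*} [DecidableEq V] (φ : V → ℕ) : applySeq φ [] = φ := rfl

lemma applySeq_cons' {V : Type*} [DecidableEq V] (φ : V → ℕ) (p : V × ℕ) (σ : List (V × ℕ)) :
    applySeq φ (p :: σ) = applySeq (Function.update φ p.1 p.2) σ := rfl

lemma applySeq_append {V : Type*} [DecidableEq V] (φ : V → ℕ) (σ τ : List (V × ℕ)) :
    applySeq φ (σ ++ τ) = applySeq (applySeq φ σ) τ := List.foldl_append

lemma applySeq_congr {V : Type*} [DecidableEq V] {φ ψ : V → ℕ} (σ : List (V × ℕ)) {v : V}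
    (h : φ v = ψ v) : applySeq φ σ v = applySeq ψ σ v := by
  induction σ generalizing φ ψ with
  | nil => exact h
  | cons p σ ih =>
    rw [applySeq_cons', applySeq_cons']
    apply ih
    by_cases hv : v = p.1
    · subst hv; simp [Function.update]
    · simp [Function.update, hv, h]

lemma applySeq_of_not_mem {V : Type*} [DecidableEq V] {φ : V → ℕ} {σ : List (V × ℕ)} {v : V}
    (h : v ∉ σ.map Prod.fst) : applySeq φ σ v = φ v := by
  induction σ generalizing φ with
  | nil => rfl
  | cons p σ ih =>
    simp only [List.map_cons, List.mem_cons, not_or] at h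
    rw [applySeq_cons', ih h.2, Function.update_of_ne h.1]

lemma prefix_append_cases {α : Type*} {π l1 l2 : List α} (h : π <+: l1 ++ l2) :
    π <+: l1 ∨ ∃ π2, π2 <+: l2 ∧ π = l1 ++ π2 := by
  by_cases hl : π.length ≤ l1.length
  · exact Or.inl ((List.isPrefix_append_of_length hl).mp h)
  · right
    refine ⟨π.drop l1.length, ?_, ?_⟩
    · have := h.drop l1.length
      simpa using this
    · have h1 : l1 <+: π :=
        List.prefix_of_prefix_length_le (l1.prefix_append l2) h (le_of_not_ge hl)
      obtain ⟨r, hr⟩ := h1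
      rw [← hr]; simp

lemma applySeq_prefix_once {V : Type*} [DecidableEq V] {σ τ : List (V × ℕ)} {φ : V → ℕ} {v : V}
    (honce : OnceOnly σ) (hpre : τ <+: σ) :
    applySeq φ τ v = φ v ∨ applySeq φ τ v = applySeq φ σ v := by
  by_cases hv : v ∈ τ.map Prod.fst
  · right
    obtain ⟨r, hr⟩ := hpre
    subst hr
    rw [applySeq_append]
    have hnd : v ∉ r.map Prod.fst := by
      have := honce
      unfold OnceOnly at this
      rw [List.map_append, List.nodup_append] at this
      exact fun hvr => this.2.2 v hv v hvr rfl
    rw [applySeq_of_not_mem hnd]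
  · exact Or.inl (applySeq_of_not_mem hv)

/-- The key one-step combination lemma: a proper once-only `(S1 ∩ S2)`-late recoloring
sequence `τ` on `G[S2]` and a proper once-only `SH`-late sequence `σ` on `G[S1]` with
compatible endpoints combine into a proper once-only `SH`-late sequence on all of `G`. -/
lemma step_combine {V : Type*} [DecidableEq V] [Fintype V]
    (G : SimpleGraph V) (SH S1 S2 : Finset V)
    (hHS1 : SH ⊆ S1)
    (hcov : ∀ v : V, v ∈ S1 ∨ v ∈ S2)
    (hedges : ∀ u v : V, G.Adj u v → (u ∈ S1 ∧ v ∈ S1) ∨ (u ∈ S2 ∧ v ∈ S2))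
    (L : V → Finset ℕ) (α ψa ψb θa θb : V → ℕ) (σ τ : List (V × ℕ))
    (hα1 : ∀ v ∈ S1, α v = ψa v) (hα2 : ∀ v ∈ S2, α v = θa v)
    (hθψb : ∀ v ∈ S1 ∩ S2, θb v = ψb v)
    (hσin : SeqIn S1 σ) (hσonce : OnceOnly σ) (hσprop : ProperSeqOn G S1 ψa σ)
    (hσeq : applySeq ψa σ = ψb) (hσL : ∀ v ∈ S1, ψb v ∈ L v)
    (hτin : SeqIn S2 τ) (hτonce : OnceOnly τ) (hτprop : ProperSeqOn G S2 θa τ)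
    (hτeq : applySeq θa τ = θb) (hτL : ∀ v ∈ S2, θb v ∈ L v)
    (hτlate : LateFor (S1 ∩ S2) τ) (hσlate : LateFor SH σ) :
    SeqIn Finset.univ (τ.filter (fun p => p.1 ∉ S1) ++ σ) ∧
    OnceOnly (τ.filter (fun p => p.1 ∉ S1) ++ σ) ∧
    ProperSeqOn G Finset.univ α (τ.filter (fun p => p.1 ∉ S1) ++ σ) ∧
    applySeq α (τ.filter (fun p => p.1 ∉ S1) ++ σ) =
      (fun v => if v ∈ S1 then ψb v else θb v) ∧
    (∀ v, (if v ∈ S1 then ψb v else θb v) ∈ L v) ∧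
    LateFor SH (τ.filter (fun p => p.1 ∉ S1) ++ σ) := by
  set τE := τ.filter (fun p => p.1 ∉ S1) with hτEdef
  -- membership facts
  have hτE_mem : ∀ p ∈ τE, p.1 ∈ S2 ∧ p.1 ∉ S1 := by
    intro p hp
    rw [hτEdef, List.mem_filter] at hp
    exact ⟨hτin p hp.1, by simpa using hp.2⟩
  -- τE is the "early" part of τ
  have hfe : τ.filter (fun p => p.1 ∉ S1 ∩ S2) = τE := by
    rw [hτEdef]
    apply List.filter_congr
    intro p hp
    have h2 : p.1 ∈ S2 := hτin p hp
    simp [Finset.mem_inter, h2]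
  have hτsplit : τ = τE ++ subSeq (S1 ∩ S2) τ := by
    conv_lhs => rw [hτlate]
    rw [hfe]
  have hτEpre : τE <+: τ := ⟨subSeq (S1 ∩ S2) τ, hτsplit.symm⟩
  have hlate_mem : ∀ w ∈ (subSeq (S1 ∩ S2) τ).map Prod.fst, w ∈ S1 := by
    intro w hw
    rw [List.mem_map] at hw
    obtain ⟨p, hp, rfl⟩ := hw
    rw [subSeq, List.mem_filter] at hp
    have := hp.2
    simp only [decide_eq_true_eq] at this
    exact (Finset.mem_inter.mp this).1
  -- (C) : value of the early part at vertices outside S1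
  have hC : ∀ v : V, v ∉ S1 → applySeq θa τE v = θb v := by
    intro v hv
    rw [← hτeq]
    conv_rhs => rw [hτsplit]
    rw [applySeq_append]
    rw [applySeq_of_not_mem (fun h => hv (hlate_mem v h))]
  have hτE_not_S1 : ∀ v ∈ S1, v ∉ τE.map Prod.fst := by
    intro v hv h
    rw [List.mem_map] at h
    obtain ⟨p, hp, rfl⟩ := h
    exact (hτE_mem p hp).2 hv
  -- values after τE ++ σ' at S1 vertices
  have gS1 : ∀ σ' : List (V × ℕ), ∀ v ∈ S1,
      applySeq α (τE ++ σ') v = applySeq ψa σ' v := by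
    intro σ' v hv
    rw [applySeq_append]
    apply applySeq_congr
    rw [applySeq_of_not_mem (hτE_not_S1 v hv), hα1 v hv]
  -- values after τE ++ σ' at S2 \ S1 vertices, for σ' with vertices in S1
  have gS2 : ∀ σ' : List (V × ℕ), σ' <+: σ → ∀ v : V, v ∈ S2 → v ∉ S1 →
      applySeq α (τE ++ σ') v = θb v := by
    intro σ' hσ' v hv2 hv1
    rw [applySeq_append]
    have hvσ : v ∉ σ'.map Prod.fst := by
      intro h
      rw [List.mem_map] at h
      obtain ⟨p, hp, rfl⟩ := h
      exact hv1 (hσin p (hσ'.sublist.mem hp))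
    rw [applySeq_of_not_mem hvσ]
    rw [applySeq_congr τE (hα2 v hv2)]
    exact hC v hv1
  have hψa_prop : ProperOn G S1 ψa := by
    have := hσprop [] (List.nil_prefix)
    rwa [applySeq_nil'] at this
  have hθb_prop : ProperOn G S2 θb := by
    have := hτprop τ (List.prefix_refl τ)
    rwa [hτeq] at this
  have hθa_eq_ψa : ∀ v ∈ S1 ∩ S2, θa v = ψa v := by
    intro v hv
    rw [Finset.mem_inter] at hv
    rw [← hα2 v hv.2, hα1 v hv.1]
  -- properness of the early-early part (prefix of τE)
  refine ⟨fun p _ => Finset.mem_univ _, ?_, ?_, ?_, ?_, ?_⟩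
  · -- OnceOnly
    unfold OnceOnly
    rw [List.map_append, List.nodup_append]
    refine ⟨?_, hσonce, ?_⟩
    · exact hτonce.sublist (List.Sublist.map Prod.fst (List.filter_sublist (l := τ)))
    · intro w hw w' hws hww'; subst hww'
      rw [List.mem_map] at hw hws
      obtain ⟨p, hp, rfl⟩ := hw
      obtain ⟨q, hq, hqe⟩ := hws
      exact (hτE_mem p hp).2 (hqe ▸ hσin q hq)
  · -- ProperSeqOn
    intro π hπ
    rcases prefix_append_cases hπ with hπ1 | ⟨σ', hσ', rfl⟩
    · -- prefix of τE
      intro u _ v _ hadj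
      have fS1 : ∀ w ∈ S1, applySeq α π w = ψa w := by
        intro w hw
        rw [applySeq_of_not_mem (fun h => hτE_not_S1 w hw (hπ1.sublist.map Prod.fst |>.mem h))]
        exact hα1 w hw
      have fS2 : ∀ w ∈ S2, applySeq α π w = applySeq θa π w :=
        fun w hw => applySeq_congr π (hα2 w hw)
      rcases hedges u v hadj with ⟨hu, hv⟩ | ⟨hu, hv⟩
      · rw [fS1 u hu, fS1 v hv]
        exact hψa_prop u hu v hv hadj
      · rw [fS2 u hu, fS2 v hv]
        exact hτprop π (hπ1.trans hτEpre) u hu v hv hadj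
    · -- τE ++ σ' with σ' prefix of σ
      intro u _ v _ hadj
      -- helper for the mixed case
      have mixed : ∀ x y : V, G.Adj x y → x ∈ S1 → x ∈ S2 → y ∈ S2 → y ∉ S1 →
          applySeq α (τE ++ σ') x ≠ applySeq α (τE ++ σ') y := by
        intro x y hxy hx1 hx2 hy2 hy1
        rw [gS1 σ' x hx1, gS2 σ' hσ' y hy2 hy1]
        rcases applySeq_prefix_once hσonce hσ' (φ := ψa) (v := x) with h | h
        · rw [h]
          -- ψa x ≠ θb y, via the intermediate coloring applySeq θa τE
          have hd := hτprop τE hτEpre x hx2 y hy2 hxy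
          rw [applySeq_of_not_mem (hτE_not_S1 x hx1), hC y hy1] at hd
          rwa [← hθa_eq_ψa x (Finset.mem_inter.mpr ⟨hx1, hx2⟩)]
        · rw [h, hσeq]
          -- ψb x = θb x ≠ θb y
          rw [← hθψb x (Finset.mem_inter.mpr ⟨hx1, hx2⟩)]
          exact hθb_prop x hx2 y hy2 hxy
      by_cases hu1 : u ∈ S1 <;> by_cases hv1 : v ∈ S1
      · rw [gS1 σ' u hu1, gS1 σ' v hv1]
        exact hσprop σ' hσ' u hu1 v hv1 hadj
      · -- u ∈ S1, v ∉ S1; edge must be inside S2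
        have hv2 : v ∈ S2 := (hcov v).resolve_left hv1
        have hu2 : u ∈ S2 := by
          rcases hedges u v hadj with ⟨_, hv⟩ | ⟨hu, _⟩
          · exact absurd hv hv1
          · exact hu
        exact mixed u v hadj hu1 hu2 hv2 hv1
      · have hu2 : u ∈ S2 := (hcov u).resolve_left hu1
        have hv2 : v ∈ S2 := by
          rcases hedges u v hadj with ⟨hu, _⟩ | ⟨_, hv⟩
          · exact absurd hu hu1
          · exact hv
        exact (mixed v u hadj.symm hv1 hv2 hu2 hu1).symm
      · have hu2 : u ∈ S2 := (hcov u).resolve_left hu1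
        have hv2 : v ∈ S2 := (hcov v).resolve_left hv1
        rw [gS2 σ' hσ' u hu2 hu1, gS2 σ' hσ' v hv2 hv1]
        exact hθb_prop u hu2 v hv2 hadj
  · -- final coloring
    funext v
    by_cases hv : v ∈ S1
    · rw [gS1 σ v hv, hσeq, if_pos hv]
    · rw [gS2 σ (List.prefix_refl σ) v ((hcov v).resolve_left hv) hv, if_neg hv]
  · -- list coloring
    intro v
    by_cases hv : v ∈ S1
    · rw [if_pos hv]; exact hσL v hv
    · rw [if_neg hv]; exact hτL v ((hcov v).resolve_left hv)
  · -- LateFor SH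
    unfold LateFor subSeq
    rw [List.filter_append, List.filter_append]
    have h1 : τE.filter (fun p => p.1 ∉ SH) = τE :=
      List.filter_eq_self.mpr (fun p hp => by
        simp only [decide_eq_true_eq]
        exact fun h => (hτE_mem p hp).2 (hHS1 h))
    have h2 : τE.filter (fun p => p.1 ∈ SH) = [] :=
      List.filter_eq_nil_iff.mpr (fun p hp => by
        simp only [decide_eq_true_eq]
        exact fun h => (hτE_mem p hp).2 (hHS1 h))
    rw [h1, h2, List.nil_append, List.append_assoc]
    congr 1

/-- Lemma (combining trajectories): Let `H = G[SH]` be an induced subgraph of `G`, and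
suppose `G = G1 ∪ G2` for induced subgraphs `G1 = G[S1]` and `G2 = G[S2]` with `H ⊆ G1`
(so `S1 ∪ S2` covers all vertices and every edge lies within `S1` or within `S2`).
Let `φ0` be a proper coloring of `G` and `(δ0, δ1, δ2)` an `(L1, L2)`-trajectory in `H`.
If `(δ0, δ1, δ2)` lifts to a trajectory `(ψ0, ψ1, ψ2)` in `G1` starting with the
restriction of `φ0`, and the restriction of `(ψ0, ψ1, ψ2)` to `G1 ∩ G2` lifts to a
trajectory in `G2` starting with the restriction of `φ0`, then `(δ0, δ1, δ2)` lifts to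
an `(L1, L2)`-trajectory in `G` starting with `φ0`. -/
theorem lifts_of_union {V : Type*} [DecidableEq V] [Fintype V]
    (G : SimpleGraph V) (SH S1 S2 : Finset V)
    (hHS1 : SH ⊆ S1) (hcover : S1 ∪ S2 = Finset.univ)
    (hedges : ∀ u v : V, G.Adj u v → (u ∈ S1 ∧ v ∈ S1) ∨ (u ∈ S2 ∧ v ∈ S2))
    (L1 L2 : V → Finset ℕ) (φ0 : V → ℕ) (hφ0 : ProperOn G Finset.univ φ0)
    (δ0 δ1 δ2 : V → ℕ) (hδ : TrajectoryOn G SH L1 L2 δ0 δ1 δ2)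
    (ψ0 ψ1 ψ2 : V → ℕ)
    (hψstart : ∀ v ∈ S1, ψ0 v = φ0 v)
    (hψ : LiftsTo G S1 SH L1 L2 δ0 δ1 δ2 ψ0 ψ1 ψ2)
    (hθ : ∃ θ0 θ1 θ2 : V → ℕ, (∀ v ∈ S2, θ0 v = φ0 v) ∧
      LiftsTo G S2 (S1 ∩ S2) L1 L2 ψ0 ψ1 ψ2 θ0 θ1 θ2) :
    ∃ φ1 φ2 : V → ℕ, LiftsTo G Finset.univ SH L1 L2 δ0 δ1 δ2 φ0 φ1 φ2 := by
  obtain ⟨σ1, σ2, hψδ0, hψδ1, hψδ2, Wψ, hσ1late, hσ2late⟩ := hψ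
  obtain ⟨θ0, θ1, θ2, hθ0, τ1, τ2, hθψ0, hθψ1, hθψ2, Wθ, hτ1late, hτ2late⟩ := hθ
  obtain ⟨hψ0prop, hσ1in, hσ1once, hσ1prop, hσ1eq, hψ1L, hσ2in, hσ2once, hσ2prop, hσ2eq,
    hψ2L⟩ := Wψ
  obtain ⟨hθ0prop, hτ1in, hτ1once, hτ1prop, hτ1eq, hθ1L, hτ2in, hτ2once, hτ2prop, hτ2eq,
    hθ2L⟩ := Wθ
  have hcov : ∀ v : V, v ∈ S1 ∨ v ∈ S2 := fun v =>
    Finset.mem_union.mp (hcover ▸ Finset.mem_univ v)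
  -- combine the first recoloring sequences
  obtain ⟨hin1, honce1, hprop1, heq1, hL1', hlate1⟩ :=
    step_combine G SH S1 S2 hHS1 hcov hedges L1 φ0 ψ0 ψ1 θ0 θ1 σ1 τ1
      (fun v hv => (hψstart v hv).symm) (fun v hv => (hθ0 v hv).symm)
      hθψ1 hσ1in hσ1once hσ1prop hσ1eq hψ1L hτ1in hτ1once hτ1prop hτ1eq hθ1L hτ1late hσ1late
  set φ1 : V → ℕ := fun v => if v ∈ S1 then ψ1 v else θ1 v with hφ1
  have hφ1S1 : ∀ v ∈ S1, φ1 v = ψ1 v := fun v hv => by rw [hφ1]; simp [hv]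
  have hφ1S2 : ∀ v ∈ S2, φ1 v = θ1 v := by
    intro v hv
    rw [hφ1]
    by_cases h1 : v ∈ S1
    · simp only [h1, if_true]
      exact (hθψ1 v (Finset.mem_inter.mpr ⟨h1, hv⟩)).symm
    · simp [h1]
  -- combine the second recoloring sequences
  obtain ⟨hin2, honce2, hprop2, heq2, hL2', hlate2⟩ :=
    step_combine G SH S1 S2 hHS1 hcov hedges L2 φ1 ψ1 ψ2 θ1 θ2 σ2 τ2
      hφ1S1 hφ1S2
      hθψ2 hσ2in hσ2once hσ2prop hσ2eq hψ2L hτ2in hτ2once hτ2prop hτ2eq hθ2L hτ2late hσ2late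
  set φ2 : V → ℕ := fun v => if v ∈ S1 then ψ2 v else θ2 v with hφ2
  refine ⟨φ1, φ2, τ1.filter (fun p => p.1 ∉ S1) ++ σ1, τ2.filter (fun p => p.1 ∉ S1) ++ σ2,
    ?_, ?_, ?_, ⟨hφ0, hin1, honce1, hprop1, heq1, fun v _ => hL1' v,
      hin2, honce2, hprop2, heq2, fun v _ => hL2' v⟩, hlate1, hlate2⟩
  · intro v hv
    rw [← hψstart v (hHS1 hv)]
    exact hψδ0 v hv
  · intro v hv
    rw [hφ1S1 v (hHS1 hv)]
    exact hψδ1 v hv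
  · intro v hv
    have : φ2 v = ψ2 v := by rw [hφ2]; simp [hHS1 hv]
    rw [this]
    exact hψδ2 v hv
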